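/- Under conditional independence of T and C given X = x, the conditional cumulative hazard of T, Λ^x(t) = ∫_{[0,t]} (1 − F^x_−(u))^{-1} dF^x(u), equals ∫_{[0,t]} (1 − H^x_−(u))^{-1} dH₁^x(u), where H^x is the conditional distribution of Y = min(T,C) and H₁^x(t) = P(Y ≤ t, Δ = 1 | X = x). -/

import Mathlib

open MeasureTheory ProbabilityTheory Set

/-!
Conditioning on `X = x` is modelled by taking `μ` to be the conditional law, under which `T` and
`C` are independent. By independence the law of `(T, C)` is a product measure, so the
subdistribution `dH₁` of `(min T C, T ≤ C)` has density `s ↦ P(C ≥ s) = 1 - Q₋(s)` with respect to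
`dF`, while `P(min T C ≥ u) = P(T ≥ u) P(C ≥ u)`, i.e. `1 - H₋ = (1 - F₋)(1 - Q₋)`. Hence
`(1 - H₋)⁻¹ dH₁ = (1 - F₋)⁻¹ (1 - Q₋)⁻¹ (1 - Q₋) dF = (1 - F₋)⁻¹ dF` wherever `1 - Q₋ > 0`.
-/

lemma one_sub_leftLim_cdf (ν : Measure ℝ) [IsProbabilityMeasure ν] (u : ℝ) :
    1 - Function.leftLim (cdf ν) u = ν.real (Ici u) := by
  have h := (cdf ν).measure_Ici (tendsto_cdf_atTop ν) u
  rw [measure_cdf] at h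
  have h_le : Function.leftLim (cdf ν) u ≤ 1 :=
    ((monotone_cdf ν).leftLim_le le_rfl).trans (cdf_le_one ν u)
  rw [measureReal_def, h, ENNReal.toReal_ofReal (sub_nonneg.mpr h_le)]

lemma cdf_map {Ω : Type*} [MeasurableSpace Ω] (μ : Measure Ω) [IsProbabilityMeasure μ]
    {X : Ω → ℝ} (hX : Measurable X) :
    ⇑(cdf (μ.map X)) = fun v => (μ {ω | X ω ≤ v}).toReal := by
  have := Measure.isProbabilityMeasure_map (μ := μ) hX.aemeasurable
  ext v
  rw [cdf_eq_real, measureReal_def, Measure.map_apply hX measurableSet_Iic]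
  rfl

lemma one_sub_leftLim_measure_le {Ω : Type*} [MeasurableSpace Ω] (μ : Measure Ω)
    [IsProbabilityMeasure μ] {X : Ω → ℝ} (hX : Measurable X) (u : ℝ) :
    1 - Function.leftLim (fun v => (μ {ω | X ω ≤ v}).toReal) u = (μ {ω | u ≤ X ω}).toReal := by
  have := Measure.isProbabilityMeasure_map (μ := μ) hX.aemeasurable
  rw [← cdf_map μ hX, one_sub_leftLim_cdf, measureReal_def, Measure.map_apply hX measurableSet_Ici]
  rfl

lemma ProbabilityTheory.IndepFun.measure_le_min {Ω : Type*} [MeasurableSpace Ω] {μ : Measure Ω} {T C : Ω → ℝ}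
    (h : IndepFun T C μ) (u : ℝ) :
    μ {ω | u ≤ min (T ω) (C ω)} = μ {ω | u ≤ T ω} * μ {ω | u ≤ C ω} := by
  have hset : {ω | u ≤ min (T ω) (C ω)} = T ⁻¹' Ici u ∩ C ⁻¹' Ici u := by
    ext ω
    simp
  rw [hset, h.measure_inter_preimage_eq_mul _ _ measurableSet_Ici measurableSet_Ici]
  rfl

lemma ProbabilityTheory.IndepFun.map_min_restrict_le_eq_withDensity {Ω : Type*} [MeasurableSpace Ω]
    {μ : Measure Ω} [IsFiniteMeasure μ] {T C : Ω → ℝ} (hT : Measurable T) (hC : Measurable C)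
    (h : IndepFun T C μ) :
    (μ.restrict {ω | T ω ≤ C ω}).map (fun ω => min (T ω) (C ω))
      = (μ.map T).withDensity (fun s => μ {ω | s ≤ C ω}) := by
  ext A hA
  set S : Set (ℝ × ℝ) := {p | p.1 ∈ A ∧ p.1 ≤ p.2}
  have hS : MeasurableSet S :=
    (measurable_fst hA).inter (measurableSet_le measurable_fst measurable_snd)
  have hpre : (fun ω => min (T ω) (C ω)) ⁻¹' A ∩ {ω | T ω ≤ C ω}
      = (fun ω => (T ω, C ω)) ⁻¹' S := by
    ext ω
    by_cases hTC : T ω ≤ C ω <;> simp [S, hTC]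
  have hslice : ∀ s, (μ.map C) (Prod.mk s ⁻¹' S) = A.indicator (fun s => μ {ω | s ≤ C ω}) s := by
    intro s
    by_cases hs : s ∈ A
    · have : Prod.mk s ⁻¹' S = Ici s := by ext c; simp [S, hs]
      rw [this, Measure.map_apply hC measurableSet_Ici, indicator_of_mem hs]
      rfl
    · have : Prod.mk s ⁻¹' S = ∅ := by ext c; simp [S, hs]
      rw [this, indicator_of_notMem hs, measure_empty]
  rw [Measure.map_apply (hT.min hC) hA, Measure.restrict_apply (hT.min hC hA), hpre,
    ← Measure.map_apply (hT.prodMk hC) hS,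
    (indepFun_iff_map_prod_eq_prod_map_map hT.aemeasurable hC.aemeasurable).mp h,
    Measure.prod_apply hS, withDensity_apply _ hA]
  simp_rw [hslice]
  exact lintegral_indicator hA _

theorem stmt_4_general {Ω : Type*} [MeasurableSpace Ω] (μ : Measure Ω) [IsProbabilityMeasure μ]
    (T C : Ω → ℝ) (hT : Measurable T) (hC : Measurable C)
    (h_indep : IndepFun T C μ)
    (F Q H Fm Qm Hm : ℝ → ℝ)
    (hF : ∀ u, F u = (μ {ω | T ω ≤ u}).toReal)
    (hQ : ∀ u, Q u = (μ {ω | C ω ≤ u}).toReal)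
    (hH : ∀ u, H u = (μ {ω | min (T ω) (C ω) ≤ u}).toReal)
    (hFm : ∀ u, Fm u = Function.leftLim F u)
    (hQm : ∀ u, Qm u = Function.leftLim Q u)
    (hHm : ∀ u, Hm u = Function.leftLim H u)
    (t : ℝ)
    (h_pos : ∀ u, 0 ≤ u → u ≤ t → 0 < 1 - Fm u ∧ 0 < 1 - Qm u) :
    ∫ u in Set.Icc 0 t, (1 - Fm u)⁻¹ ∂(Measure.map T μ)
      = ∫ u in Set.Icc 0 t, (1 - Hm u)⁻¹
          ∂(Measure.map (fun ω => min (T ω) (C ω)) (μ.restrict {ω | T ω ≤ C ω})) := by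
  have hF_surv : ∀ u, 1 - Fm u = (μ {ω | u ≤ T ω}).toReal := fun u => by
    rw [hFm, funext hF, one_sub_leftLim_measure_le μ hT]
  have hQ_surv : ∀ u, 1 - Qm u = (μ {ω | u ≤ C ω}).toReal := fun u => by
    rw [hQm, funext hQ, one_sub_leftLim_measure_le μ hC]
  have hH_surv : ∀ u, 1 - Hm u = (1 - Fm u) * (1 - Qm u) := fun u => by
    rw [hHm, funext hH, one_sub_leftLim_measure_le μ (hT.min hC), h_indep.measure_le_min,
      ENNReal.toReal_mul, hF_surv, hQ_surv]
  have h_dens_meas : Measurable fun s : ℝ => μ {ω | s ≤ C ω} :=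
    Antitone.measurable fun a b hab => measure_mono fun ω hω => hab.trans hω
  rw [h_indep.map_min_restrict_le_eq_withDensity hT hC,
    setIntegral_withDensity_eq_setIntegral_toReal_smul h_dens_meas
      (ae_of_all _ fun _ => measure_lt_top _ _) _ measurableSet_Icc]
  refine setIntegral_congr_fun measurableSet_Icc fun u hu => ?_
  have hQ_ne : 1 - Qm u ≠ 0 := (h_pos u hu.1 hu.2).2.ne'
  rw [smul_eq_mul, ← hQ_surv, hH_surv, mul_inv, mul_comm, mul_assoc, inv_mul_cancel₀ hQ_ne, mul_one]

/-- Under (conditional) independence of `T` and `C` given `X = x`, with strictly positive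
left-continuous survival factors on `[0,t]`, the conditional cumulative hazard of `T`,
`Λ(t) = ∫_{[0,t]} (1 − F₋(u))⁻¹ dF(u)`, equals `∫_{[0,t]} (1 − H₋(u))⁻¹ dH₁(u)`,
where `dF` is the law of `T`, `H` is the CDF of `Y = min(T,C)`, `H₋, F₋, Q₋` are left limits,
and `dH₁` is the subdistribution measure of `(Y, Δ = 1)`, i.e. the law of `Y` restricted to
the event `{T ≤ C}`. -/
theorem stmt_4 {Ω : Type*} [MeasurableSpace Ω] (μ : Measure Ω) [IsProbabilityMeasure μ]
    (T C : Ω → ℝ) (hT : Measurable T) (hC : Measurable C)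
    (hT_nonneg : ∀ ω, 0 ≤ T ω) (hC_nonneg : ∀ ω, 0 ≤ C ω)
    (h_indep : IndepFun T C μ)
    (F Q H Fm Qm Hm : ℝ → ℝ)
    (hF : ∀ u, F u = (μ {ω | T ω ≤ u}).toReal)
    (hQ : ∀ u, Q u = (μ {ω | C ω ≤ u}).toReal)
    (hH : ∀ u, H u = (μ {ω | min (T ω) (C ω) ≤ u}).toReal)
    (hFm : ∀ u, Fm u = Function.leftLim F u)
    (hQm : ∀ u, Qm u = Function.leftLim Q u)
    (hHm : ∀ u, Hm u = Function.leftLim H u)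
    (t : ℝ)
    (h_pos : ∀ u, 0 ≤ u → u ≤ t → 0 < 1 - Fm u ∧ 0 < 1 - Qm u) :
    ∫ u in Set.Icc 0 t, (1 - Fm u)⁻¹ ∂(Measure.map T μ)
      = ∫ u in Set.Icc 0 t, (1 - Hm u)⁻¹
          ∂(Measure.map (fun ω => min (T ω) (C ω)) (μ.restrict {ω | T ω ≤ C ω})) :=
  stmt_4_general μ T C hT hC h_indep F Q H Fm Qm Hm hF hQ hH hFm hQm hHm t h_pos
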